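/- Without the single-final-state assumption, correctness can fail: there exists a graph database G, a node v, an unambiguous NFA A with two accepting states, and a node n, such that the multiset of shortest paths from (v,q₀) to nodes of the form (n, q) with q accepting in G× does not project onto the set of shortest label-accepted paths from v to n in G; i.e., a path strictly longer than the minimal accepted-label path from v to n is a shortest path to some accepting-node copy of n. -/
import Mathlib


/-- A labelled walk starting at a given vertex, given as its list of (label, next-vertex) steps. -/
def IsLWalk {V A : Type*} (E : V → A → V → Prop) : V → List (A × V) → Prop
  | _, [] => True
  | x, (a, y) :: rest => E x a y ∧ IsLWalk E y rest

/-- The last vertex of a labelled walk starting at `x`. -/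
def endV {V A : Type*} (x : V) (l : List (A × V)) : V := (l.getLast?).elim x Prod.snd

/-- A labelled path from `x` to `z`. -/
def IsLPath {V A : Type*} (E : V → A → V → Prop) (x z : V) (l : List (A × V)) : Prop :=
  IsLWalk E x l ∧ endV x l = z

/-- The label word of a labelled walk. -/
def labels {V A : Type*} (l : List (A × V)) : List A := l.map Prod.fst

/-- The product graph of a graph database `E` and an NFA transition relation `δ`. -/
def prodE {V A Q : Type*} (E : V → A → V → Prop) (δ : Q → A → Q → Prop) :
    V × Q → A → V × Q → Prop :=
  fun p a r => E p.1 a r.1 ∧ δ p.2 a r.2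

/-- Projection of a product-graph path to the underlying graph path (keeping labels). -/
def projPG {V A Q : Type*} : List (A × (V × Q)) → List (A × V) :=
  List.map (fun e => (e.1, e.2.1))

/-- An accepting run of the NFA `δ` with initial state `q₀` and final state `qF` on the word `w`. -/
def AccRun {A Q : Type*} (δ : Q → A → Q → Prop) (q₀ qF : Q) (w : List A) (r : List (A × Q)) :
    Prop :=
  IsLWalk δ q₀ r ∧ labels r = w ∧ endV q₀ r = qF

/-- The NFA is unambiguous: every accepted word has exactly one accepting run. -/
def Unamb {A Q : Type*} (δ : Q → A → Q → Prop) (q₀ qF : Q) : Prop :=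
  ∀ (w : List A) (r₁ r₂ : List (A × Q)), AccRun δ q₀ qF w r₁ → AccRun δ q₀ qF w r₂ → r₁ = r₂

/-- The NFA accepts the word `w`. -/
def Accepts {A Q : Type*} (δ : Q → A → Q → Prop) (q₀ qF : Q) (w : List A) : Prop :=
  ∃ r, AccRun δ q₀ qF w r

/-- The shortest-path distance (number of edges) between two vertices in a labelled graph. -/
noncomputable def ldist {V A : Type*} (E : V → A → V → Prop) (x z : V) : ℕ :=
  sInf {k | ∃ l, IsLPath E x z l ∧ l.length = k}

lemma endV_cons {V A : Type*} (x : V) (p : A × V) (l : List (A × V)) :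
    endV x (p :: l) = endV p.2 l := by
  cases l with
  | nil => rfl
  | cons q t =>
    show ((p :: q :: t).getLast?).elim x Prod.snd = ((q :: t).getLast?).elim p.2 Prod.snd
    rw [List.getLast?_cons_cons]
    cases h : (q :: t).getLast? with
    | none => simp at h
    | some y => rfl

lemma walk_unique {A Q : Type*} {δ : Q → A → Q → Prop}
    (hf : ∀ q a q1 q2, δ q a q1 → δ q a q2 → q1 = q2) :
    ∀ (r₁ r₂ : List (A × Q)) (q : Q), IsLWalk δ q r₁ → IsLWalk δ q r₂ →
      labels r₁ = labels r₂ → r₁ = r₂ := by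
  intro r₁
  induction r₁ with
  | nil =>
    intro r₂ q _ _ hlab
    cases r₂ with
    | nil => rfl
    | cons p t => simp [labels] at hlab
  | cons p t ih =>
    intro r₂ q h1 h2 hlab
    cases r₂ with
    | nil => simp [labels] at hlab
    | cons p' t' =>
      obtain ⟨a, y⟩ := p
      obtain ⟨a', y'⟩ := p'
      simp [labels] at hlab
      obtain ⟨ha, hrest⟩ := hlab
      subst ha
      obtain ⟨h1e, h1w⟩ := h1
      obtain ⟨h2e, h2w⟩ := h2
      have hy : y = y' := hf q a y y' h1e h2e
      subst hy
      have := ih t' y h1w h2w (by simpa [labels] using hrest)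
      simp [this]

/-- without the single-final-state assumption correctness can fail:
there exist a graph database, a source `v`, an unambiguous NFA with a set `F` of
accepting states, and a node `n`, such that some accepting copy `(n,q)` of `n` in the
product graph is reachable but its shortest-path distance from `(v,q₀)` is strictly
larger than the minimal length of an accepted-label path from `v` to `n` in `G`. -/
theorem multiple_final_states_counterexample :
    ∃ (V A Q : Type) (E : V → A → V → Prop) (δ : Q → A → Q → Prop)
      (v n : V) (q₀ : Q) (F : Set Q),
      (∀ (w : List A) (r₁ r₂ : List (A × Q)),
          (IsLWalk δ q₀ r₁ ∧ labels r₁ = w ∧ endV q₀ r₁ ∈ F) →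
          (IsLWalk δ q₀ r₂ ∧ labels r₂ = w ∧ endV q₀ r₂ ∈ F) → r₁ = r₂) ∧
      ∃ q ∈ F,
        (∃ pl : List (A × (V × Q)), IsLPath (prodE E δ) (v, q₀) (n, q) pl) ∧
        sInf {k | ∃ l : List (A × V), IsLPath E v n l ∧
            (∃ r : List (A × Q), IsLWalk δ q₀ r ∧ labels r = labels l ∧ endV q₀ r ∈ F) ∧
            l.length = k}
          < ldist (prodE E δ) (v, q₀) (n, q) := by
  refine ⟨Bool, Bool, Fin 3, 
    (fun x a y => (x = false ∧ a = false ∧ y = true) ∨ (x = true ∧ a = true ∧ y = true)),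
    (fun q a q' => (q = 0 ∧ a = false ∧ q' = 1) ∨ (q = 1 ∧ a = true ∧ q' = 2)),
    false, true, 0, {1, 2}, ?_, 2, by simp, ?_, ?_⟩
  · -- unambiguity
    intro w r₁ r₂ h1 h2
    refine walk_unique ?_ r₁ r₂ 0 h1.1 h2.1 (h1.2.1.trans h2.2.1.symm)
    rintro q a q1 q2 (⟨rfl, rfl, rfl⟩ | ⟨rfl, rfl, rfl⟩) h2 <;>
      rcases h2 with ⟨h, h', rfl⟩ | ⟨h, h', rfl⟩ <;> simp_all
  · -- reachability of (true, 2) in the product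
    refine ⟨[(false, (true, (1 : Fin 3))), (true, (true, (2 : Fin 3)))], ⟨?_, ?_⟩⟩
    · exact ⟨⟨Or.inl ⟨rfl, rfl, rfl⟩, Or.inl ⟨rfl, rfl, rfl⟩⟩,
        ⟨Or.inr ⟨rfl, rfl, rfl⟩, Or.inr ⟨rfl, rfl, rfl⟩⟩, trivial⟩
    · rw [endV_cons, endV_cons]; rfl
  · -- the distance comparison
    have h1mem : 1 ∈ {k | ∃ l : List (Bool × Bool),
        IsLPath (fun x a y => (x = false ∧ a = false ∧ y = true) ∨
          (x = true ∧ a = true ∧ y = true)) false true l ∧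
        (∃ r : List (Bool × Fin 3),
          IsLWalk (fun q a q' => (q = 0 ∧ a = false ∧ q' = 1) ∨
            (q = 1 ∧ a = true ∧ q' = 2)) 0 r ∧ labels r = labels l ∧
          endV 0 r ∈ ({1, 2} : Set (Fin 3))) ∧ l.length = k} := by
      refine ⟨[(false, true)], ⟨⟨Or.inl ⟨rfl, rfl, rfl⟩, trivial⟩, ?_⟩,
        ⟨[(false, (1 : Fin 3))], ⟨Or.inl ⟨rfl, rfl, rfl⟩, trivial⟩, rfl, ?_⟩, rfl⟩
      · rw [endV_cons]; rfl
      · rw [endV_cons]; simp [endV]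
    have hle : sInf {k | ∃ l : List (Bool × Bool),
        IsLPath (fun x a y => (x = false ∧ a = false ∧ y = true) ∨
          (x = true ∧ a = true ∧ y = true)) false true l ∧
        (∃ r : List (Bool × Fin 3),
          IsLWalk (fun q a q' => (q = 0 ∧ a = false ∧ q' = 1) ∨
            (q = 1 ∧ a = true ∧ q' = 2)) 0 r ∧ labels r = labels l ∧
          endV 0 r ∈ ({1, 2} : Set (Fin 3))) ∧ l.length = k} ≤ 1 := Nat.sInf_le h1mem
    have h2mem : (2 : ℕ) ∈ {k | ∃ l, IsLPath (prodE
        (fun x a y => (x = false ∧ a = false ∧ y = true) ∨ (x = true ∧ a = true ∧ y = true))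
        (fun q a q' => (q = 0 ∧ a = false ∧ q' = 1) ∨ (q = 1 ∧ a = true ∧ q' = 2)))
        ((false, 0) : Bool × Fin 3) ((true, 2) : Bool × Fin 3) l ∧ l.length = k} := by
      refine ⟨[(false, (true, (1 : Fin 3))), (true, (true, (2 : Fin 3)))], ⟨?_, ?_⟩, rfl⟩
      · exact ⟨⟨Or.inl ⟨rfl, rfl, rfl⟩, Or.inl ⟨rfl, rfl, rfl⟩⟩,
          ⟨Or.inr ⟨rfl, rfl, rfl⟩, Or.inr ⟨rfl, rfl, rfl⟩⟩, trivial⟩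
      · rw [endV_cons, endV_cons]; rfl
    have hge : 2 ≤ ldist (prodE
        (fun x a y => (x = false ∧ a = false ∧ y = true) ∨ (x = true ∧ a = true ∧ y = true))
        (fun q a q' => (q = 0 ∧ a = false ∧ q' = 1) ∨ (q = 1 ∧ a = true ∧ q' = 2)))
        ((false, 0) : Bool × Fin 3) ((true, 2) : Bool × Fin 3) := by
      refine le_csInf ⟨2, h2mem⟩ ?_
      rintro k ⟨l, ⟨hw, he⟩, rfl⟩
      match l with
      | [] => exact absurd he (by simp [endV])
      | [p] =>
        exfalso
        rw [endV_cons] at he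
        simp [endV] at he
        obtain ⟨hE, hδ⟩ := hw.1
        rw [he] at hδ
        rcases hδ with ⟨h, -, h2⟩ | ⟨h, -, -⟩
        · exact absurd h2 (by decide)
        · exact absurd h (by simp)
      | p :: q :: t => simp
    omega
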